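/- Let E be a separable Banach space, γ a Borel probability measure on E, and {ν_x}_{x∈E} a Borel family of positive finite measures on E (i.e. x ↦ ν_x(A) is Borel for every Borel A). Then ν_x is a Dirac mass for γ-a.e. x if and only if for every pair of disjoint Borel sets A₁, A₂ ⊂ E one has ν_x(A₁)·ν_x(A₂) = 0 for γ-a.e. x ∈ E. -/
import Mathlib

open MeasureTheory TopologicalSpace

/-- A (positive finite) measure is a Dirac mass if it is a (possibly zero) multiple of a
Dirac measure, i.e. it is concentrated at a single point. -/
def IsDiracMass {α : Type*} [MeasurableSpace α] (μ : Measure α) : Prop :=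
  ∃ (c : ENNReal) (x : α), μ = c • Measure.dirac x

lemma isDiracMass_of_basis {E : Type*} [NormedAddCommGroup E]
    [MeasurableSpace E] [BorelSpace E] [SecondCountableTopology E]
    (μ : Measure E) [IsFiniteMeasure μ]
    (h : ∀ U ∈ countableBasis E, ∀ V ∈ countableBasis E, Disjoint U V → μ U * μ V = 0) :
    IsDiracMass μ := by
  by_cases hμ : μ = 0
  · exact ⟨0, 0, by simp [hμ]⟩
  · set N : Set E := ⋃ U ∈ {W ∈ countableBasis E | μ W = 0}, U with hN
    have hNnull : μ N = 0 := by
      apply measure_biUnion_null_iff ((countable_countableBasis E).mono (fun x hx => hx.1)) |>.2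
      exact fun U hU => hU.2
    have hNne : Nᶜ.Nonempty := by
      by_contra hc
      rw [Set.not_nonempty_iff_eq_empty, ← Set.compl_univ, compl_inj_iff] at hc
      exact hμ (Measure.measure_univ_eq_zero.mp (hc ▸ hNnull))
    obtain ⟨y, hy⟩ := hNne
    have hyB : ∀ U ∈ countableBasis E, y ∈ U → μ U ≠ 0 := by
      intro U hU hyU h0
      exact hy (Set.mem_biUnion ⟨hU, h0⟩ hyU)
    have hcompl : ({y}ᶜ : Set E) ⊆ N := by
      intro z hz
      by_contra hzN
      have hzB : ∀ V ∈ countableBasis E, z ∈ V → μ V ≠ 0 := by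
        intro V hV hzV h0
        exact hzN (Set.mem_biUnion ⟨hV, h0⟩ hzV)
      have hne : y ≠ z := fun he => hz (he ▸ rfl)
      obtain ⟨O₁, O₂, hO₁, hO₂, hyO₁, hzO₂, hdis⟩ := t2_separation hne
      obtain ⟨U, hU, hyU, hUO⟩ :=
        (isBasis_countableBasis E).exists_subset_of_mem_open hyO₁ hO₁
      obtain ⟨V, hV, hzV, hVO⟩ :=
        (isBasis_countableBasis E).exists_subset_of_mem_open hzO₂ hO₂
      have := h U hU V hV (hdis.mono hUO hVO)
      rcases mul_eq_zero.mp this with h0 | h0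
      · exact hyB U hU hyU h0
      · exact hzB V hV hzV h0
    have hnull : μ ({y}ᶜ) = 0 := measure_mono_null hcompl hNnull
    refine ⟨μ {y}, y, ?_⟩
    ext s hs
    have hsplit := measure_inter_add_diff (μ := μ) s (measurableSet_singleton y)
    have hdiff : μ (s \ {y}) = 0 := measure_mono_null (by intro x hx; exact hx.2) hnull
    rw [Measure.smul_apply, Measure.dirac_apply' _ hs, smul_eq_mul]
    by_cases hys : y ∈ s
    · have : s ∩ {y} = {y} := by
        apply Set.eq_singleton_iff_unique_mem.mpr
        exact ⟨⟨hys, rfl⟩, fun x hx => hx.2⟩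
      rw [← hsplit, this, hdiff, add_zero, Set.indicator_of_mem hys, Pi.one_apply, mul_one]
    · have : s ∩ {y} = ∅ := by
        ext x; simp only [Set.mem_inter_iff, Set.mem_singleton_iff, Set.mem_empty_iff_false,
          iff_false, not_and]
        rintro hx rfl; exact hys hx
      rw [← hsplit, this, measure_empty, zero_add, hdiff,
        Set.indicator_of_notMem hys, mul_zero]

theorem stmt_6 (E : Type*) [NormedAddCommGroup E] [NormedSpace ℝ E]
    [TopologicalSpace.SeparableSpace E] [MeasurableSpace E] [BorelSpace E]
    (γ : Measure E) [IsProbabilityMeasure γ]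
    (ν : E → Measure E) (hfin : ∀ x, IsFiniteMeasure (ν x))
    (hmeas : ∀ A : Set E, MeasurableSet A → Measurable fun x => ν x A) :
    (∀ᵐ x ∂γ, IsDiracMass (ν x)) ↔
      ∀ A₁ A₂ : Set E, MeasurableSet A₁ → MeasurableSet A₂ → Disjoint A₁ A₂ →
        ∀ᵐ x ∂γ, ν x A₁ * ν x A₂ = 0 := by
  haveI : SecondCountableTopology E := UniformSpace.secondCountable_of_separable E
  constructor
  · intro h A₁ A₂ h₁ h₂ hd
    filter_upwards [h] with x ⟨c, y, hxy⟩
    rw [hxy, Measure.smul_apply, Measure.smul_apply, Measure.dirac_apply' _ h₁,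
      Measure.dirac_apply' _ h₂, smul_eq_mul, smul_eq_mul]
    by_cases hy : y ∈ A₁
    · have : y ∉ A₂ := Set.disjoint_left.mp hd hy
      simp [Set.indicator_of_notMem this]
    · simp [Set.indicator_of_notMem hy]
  · intro h
    have hae : ∀ᵐ x ∂γ, ∀ U ∈ countableBasis E, ∀ V ∈ countableBasis E,
        Disjoint U V → ν x U * ν x V = 0 := by
      rw [ae_ball_iff (countable_countableBasis E)]
      intro U hU
      rw [ae_ball_iff (countable_countableBasis E)]
      intro V hV
      by_cases hUV : Disjoint U V
      · filter_upwards [h U V (isOpen_of_mem_countableBasis hU).measurableSet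
          (isOpen_of_mem_countableBasis hV).measurableSet hUV] with x hx _
        exact hx
      · filter_upwards with x h'; exact absurd h' hUV
    filter_upwards [hae] with x hx
    haveI := hfin x
    exact isDiracMass_of_basis (ν x) hx
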